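/- Let J be a C¹ almost complex structure on ℝ^{2n} (J² = −id) and f : 𝔻 → ℝ^{2n} a C² J-holomorphic disc (f_x + J(f)f_y = 0). Let φ = a + ib : 𝔻 → ℂ be holomorphic (so a_x = b_y, a_y = −b_x). Then the vector field V := a·f' + b·J(f)f', where f' := f_x, is a J-holomorphic variational vector field along f, i.e., V_x + J(f)V_y + d_fJ(V)f_y = 0. -/

import Mathlib

/-!
Write `f_x = ∂_1 f`, `f_y = ∂_I f` and `L` for the linearization of the `J`-holomorphy
equation at `f`. Differentiating `f_x + J(f) f_y = 0` along `x` and `y` (and using the symmetry of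
`D²f`) gives `L f_x = L f_y = 0`: these are the variations of `f` by translations of the disc.
Since `J f_x = f_y`, `V = a f_x + b f_y`, and the Leibniz rule
`L (c W) = c L W + c_x W + c_y J W` yields `L V = (a_x - b_y) f_x + (a_y + b_x) f_y`, which vanishes
by the Cauchy–Riemann equations for `φ = a + ib`.
-/

open Metric Complex Filter Topology

section CauchyRiemann

variable {φ : ℂ → ℂ} {ζ : ℂ}

theorem DifferentiableAt.hasFDerivAt_re_comp (h : DifferentiableAt ℂ φ ζ) :
    HasFDerivAt (fun z => (φ z).re) (reCLM.comp ((fderiv ℂ φ ζ).restrictScalars ℝ)) ζ :=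
  reCLM.hasFDerivAt.comp ζ (h.hasFDerivAt.restrictScalars ℝ)

theorem DifferentiableAt.hasFDerivAt_im_comp (h : DifferentiableAt ℂ φ ζ) :
    HasFDerivAt (fun z => (φ z).im) (imCLM.comp ((fderiv ℂ φ ζ).restrictScalars ℝ)) ζ :=
  imCLM.hasFDerivAt.comp ζ (h.hasFDerivAt.restrictScalars ℝ)

theorem DifferentiableAt.fderiv_re_comp_apply_one (h : DifferentiableAt ℂ φ ζ) :
    fderiv ℝ (fun z => (φ z).re) ζ 1 = fderiv ℝ (fun z => (φ z).im) ζ I := by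
  rw [h.hasFDerivAt_re_comp.fderiv, h.hasFDerivAt_im_comp.fderiv]
  simp

theorem DifferentiableAt.fderiv_re_comp_apply_I (h : DifferentiableAt ℂ φ ζ) :
    fderiv ℝ (fun z => (φ z).re) ζ I = -fderiv ℝ (fun z => (φ z).im) ζ 1 := by
  rw [h.hasFDerivAt_re_comp.fderiv, h.hasFDerivAt_im_comp.fderiv]
  simp

end CauchyRiemann

theorem ContinuousLinearMap.apply_eq_of_add_apply_eq_zero {R E : Type*} [Ring R]
    [TopologicalSpace E] [AddCommGroup E] [Module R E] [IsTopologicalAddGroup E]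
    {T : E →L[R] E} (hT : T.comp T = -ContinuousLinearMap.id R E) {v w : E}
    (h : v + T w = 0) : T v = w := by
  rw [eq_neg_of_add_eq_zero_left h, map_neg, ← T.comp_apply, hT]
  simp

section SecondDerivative

variable {E F : Type*} [NormedAddCommGroup E] [NormedSpace ℝ E] [NormedAddCommGroup F]
  [NormedSpace ℝ F] {f : E → F} {x : E}

theorem fderiv_fderiv_apply (hf : DifferentiableAt ℝ (fderiv ℝ f) x) (v w : E) :
    fderiv ℝ (fun z => fderiv ℝ f z w) x v = fderiv ℝ (fderiv ℝ f) x v w := by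
  simp [fderiv_clm_apply hf (differentiableAt_const w)]

theorem ContDiffAt.differentiableAt_fderiv_apply (hf : ContDiffAt ℝ 2 f x) (w : E) :
    DifferentiableAt ℝ (fun z => fderiv ℝ f z w) x :=
  ((hf.fderiv_right (m := 1) one_add_one_eq_two.le).differentiableAt one_ne_zero).clm_apply
    (differentiableAt_const w)

end SecondDerivative

namespace JHolomorphic

variable {F : Type*} [NormedAddCommGroup F] [NormedSpace ℝ F]
  (J : F → F →L[ℝ] F) (f : ℂ → F)

noncomputable def linearizedCR (W : ℂ → F) (ζ : ℂ) : F :=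
  fderiv ℝ W ζ 1 + J (f ζ) (fderiv ℝ W ζ I) + fderiv ℝ J (f ζ) (W ζ) (fderiv ℝ f ζ I)

variable {J f} {W W₁ W₂ : ℂ → F} {ζ : ℂ}

theorem linearizedCR_congr (h : W₁ =ᶠ[𝓝 ζ] W₂) :
    linearizedCR J f W₁ ζ = linearizedCR J f W₂ ζ := by
  simp only [linearizedCR, h.fderiv_eq, h.eq_of_nhds]

theorem linearizedCR_add (h₁ : DifferentiableAt ℝ W₁ ζ) (h₂ : DifferentiableAt ℝ W₂ ζ) :
    linearizedCR J f (fun z => W₁ z + W₂ z) ζ =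
      linearizedCR J f W₁ ζ + linearizedCR J f W₂ ζ := by
  simp only [linearizedCR, fderiv_fun_add h₁ h₂, map_add, add_apply]
  abel

theorem linearizedCR_smul {c : ℂ → ℝ} (hc : DifferentiableAt ℝ c ζ)
    (hW : DifferentiableAt ℝ W ζ) :
    linearizedCR J f (fun z => c z • W z) ζ = c ζ • linearizedCR J f W ζ
      + fderiv ℝ c ζ 1 • W ζ + fderiv ℝ c ζ I • J (f ζ) (W ζ) := by
  simp only [linearizedCR, fderiv_fun_smul hc hW, map_add, map_smul, add_apply, smul_apply,
    ContinuousLinearMap.smulRight_apply]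
  module

theorem linearizedCR_fderiv_apply_eq_zero {U : Set ℂ} (hU : U ∈ 𝓝 ζ)
    (hhol : ∀ z ∈ U, fderiv ℝ f z 1 + J (f z) (fderiv ℝ f z I) = 0)
    (hf : ContDiffAt ℝ 2 f ζ) (hJ : DifferentiableAt ℝ J (f ζ)) (v : ℂ) :
    linearizedCR J f (fun z => fderiv ℝ f z v) ζ = 0 := by
  have hf' : DifferentiableAt ℝ f ζ := hf.differentiableAt two_ne_zero
  have hf'' : DifferentiableAt ℝ (fderiv ℝ f) ζ :=
    (hf.fderiv_right (m := 1) one_add_one_eq_two.le).differentiableAt one_ne_zero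
  have hsymm := hf.isSymmSndFDerivAt (by simp)
  have hdiff := hf.differentiableAt_fderiv_apply
  have hE : fderiv ℝ (fun z => fderiv ℝ f z 1 + J (f z) (fderiv ℝ f z I)) ζ v = 0 := by
    have hzero : (fun z => fderiv ℝ f z 1 + J (f z) (fderiv ℝ f z I)) =ᶠ[𝓝 ζ] fun _ => 0 :=
      eventually_of_mem hU hhol
    simp [hzero.fderiv_eq]
  have hJf : DifferentiableAt ℝ (fun z => J (f z)) ζ := hJ.comp ζ hf'
  rw [fderiv_fun_add (hdiff 1) (hJf.clm_apply (hdiff I)),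
    fderiv_clm_apply hJf (hdiff I), fderiv_fun_comp ζ hJ hf'] at hE
  simpa [linearizedCR, add_assoc, fderiv_fderiv_apply hf'', hsymm v] using hE

end JHolomorphic

open JHolomorphic in
/-- Lemma 6 of the paper: if `f` is a `J`-holomorphic disc and `φ = a + ib` is a usual
holomorphic function on the disc, then `V = a • f' + b • J(f) f'` (with `f' = f_x`) is a
`J`-holomorphic variational vector field along `f`, i.e. it satisfies
`V_x + J(f) V_y + (d_f J)(V) f_y = 0`. -/
theorem holomorphic_multiple_is_variational {n : ℕ}
    (J : (Fin (2 * n) → ℝ) → ((Fin (2 * n) → ℝ) →L[ℝ] (Fin (2 * n) → ℝ)))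
    (hJ2 : ∀ z, (J z).comp (J z) = -ContinuousLinearMap.id ℝ (Fin (2 * n) → ℝ))
    (hJsmooth : ContDiff ℝ 1 J)
    (f : ℂ → (Fin (2 * n) → ℝ))
    (hf : ContDiffOn ℝ 2 f (ball (0 : ℂ) 1))
    (hJhol : ∀ ζ ∈ ball (0 : ℂ) 1,
      fderiv ℝ f ζ 1 + J (f ζ) (fderiv ℝ f ζ Complex.I) = 0)
    (φ : ℂ → ℂ) (hφ : DifferentiableOn ℂ φ (ball (0 : ℂ) 1))
    (V : ℂ → (Fin (2 * n) → ℝ))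
    (hV : V = fun ζ => (φ ζ).re • (fderiv ℝ f ζ 1)
      + (φ ζ).im • (J (f ζ) (fderiv ℝ f ζ 1))) :
    ∀ ζ ∈ ball (0 : ℂ) 1,
      fderiv ℝ V ζ 1 + J (f ζ) (fderiv ℝ V ζ Complex.I)
        + (fderiv ℝ J (f ζ) (V ζ)) (fderiv ℝ f ζ Complex.I) = 0 := by
  intro ζ hζ
  have hU : ball (0 : ℂ) 1 ∈ 𝓝 ζ := isOpen_ball.mem_nhds hζ
  have hfζ : ContDiffAt ℝ 2 f ζ := (hf ζ hζ).contDiffAt hU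
  have hφζ : DifferentiableAt ℂ φ ζ := hφ.differentiableAt hU
  have hJf : DifferentiableAt ℝ J (f ζ) := hJsmooth.differentiable one_ne_zero (f ζ)
  have hJfx : ∀ z ∈ ball (0 : ℂ) 1, J (f z) (fderiv ℝ f z 1) = fderiv ℝ f z I := fun z hz =>
    ContinuousLinearMap.apply_eq_of_add_apply_eq_zero (hJ2 (f z)) (hJhol z hz)
  have hJfy : J (f ζ) (fderiv ℝ f ζ I) = -fderiv ℝ f ζ 1 :=
    eq_neg_of_add_eq_zero_right (hJhol ζ hζ)
  have hVloc : V =ᶠ[𝓝 ζ] fun z => (φ z).re • fderiv ℝ f z 1 + (φ z).im • fderiv ℝ f z I := by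
    filter_upwards [hU] with z hz
    simp only [hV, hJfx z hz]
  have hfv := hfζ.differentiableAt_fderiv_apply
  have hre := hφζ.hasFDerivAt_re_comp.differentiableAt
  have him := hφζ.hasFDerivAt_im_comp.differentiableAt
  have htranslate := linearizedCR_fderiv_apply_eq_zero hU hJhol hfζ hJf
  change linearizedCR J f V ζ = 0
  rw [linearizedCR_congr hVloc, linearizedCR_add (hre.fun_smul (hfv 1)) (him.fun_smul (hfv I)),
    linearizedCR_smul hre (hfv 1), linearizedCR_smul him (hfv I), htranslate, htranslate,
    hJfx ζ hζ, hJfy, hφζ.fderiv_re_comp_apply_one, hφζ.fderiv_re_comp_apply_I]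
  module
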